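/- Let D be a domain of linear orders, and suppose D is not connected: there exist P*, P** in D not joined by any path of adjacent preferences in D. Let D̄ be the connected component of P* in D. For n ≥ 2 voters, define the scf f: D^n → A by f(P) = r_1(P_1) if P_1 ∈ D̄ and f(P) = r_1(P_2) otherwise. Then f is unanimous and locally strategy-proof. If moreover D̄ and D \ D̄ each contain preferences with at least two different top alternatives across the two sets (which holds whenever D is minimally rich and has a component missing some top alternative), then f is not dictatorial. -/
import Mathlib


open Relation

/-- A preference is a ranking: a bijection from alternatives to ranks (0 = best). -/
abbrev Pref (A : Type*) [Fintype A] := A ≃ Fin (Fintype.card A)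

namespace Pref

variable {A : Type*} [Fintype A]

/-- The rank (as a natural number, 0 = best) of alternative `a` in preference `P`. -/
def rk (P : Pref A) (a : A) : ℕ := (P a : ℕ)

/-- The top-ranked alternative of `P`. -/
noncomputable def top [Nonempty A] (P : Pref A) : A := P.symm ⟨0, Fintype.card_pos⟩

/-- `a` is strictly preferred to `b` under `P`. -/
def SPrefers (P : Pref A) (a b : A) : Prop := rk P a < rk P b

/-- Two preferences are adjacent if they differ by one swap of consecutively
ranked alternatives. -/
def Adjacent (P P' : Pref A) : Prop :=
  ∃ a b : A, rk P a = rk P b + 1 ∧ rk P' a = rk P b ∧ rk P' b = rk P a ∧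
    ∀ c : A, c ≠ a → c ≠ b → rk P c = rk P' c

end Pref

open Pref

variable {A : Type*} [Fintype A] [Nonempty A]

/-- One step between members of the domain `D` along adjacent preferences. -/
def StepRel (D : Set (Pref A)) (P Q : Pref A) : Prop := P ∈ D ∧ Q ∈ D ∧ Adjacent P Q

/-- The domain `D` is connected: any two members are joined by a path of
adjacent preferences inside `D`. -/
def DConnected (D : Set (Pref A)) : Prop :=
  ∀ P ∈ D, ∀ Q ∈ D, ReflTransGen (StepRel D) P Q

/-- One step inside `D` along adjacent preferences keeping the same top. -/
def TStepRel (D : Set (Pref A)) (P Q : Pref A) : Prop :=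
  StepRel D P Q ∧ Pref.top P = Pref.top Q

/-- The top-connected closure of `P` in `D`. -/
def TCC (D : Set (Pref A)) (P : Pref A) : Set (Pref A) :=
  {Q | ReflTransGen (TStepRel D) P Q}

/-- Neighbours of a subset `S` inside the domain `D`. -/
def Nbr (D S : Set (Pref A)) : Set (Pref A) :=
  {Q | Q ∈ D ∧ Q ∉ S ∧ ∃ P ∈ S, Adjacent P Q}

/-- `D` is connected with two distinct neighbours. -/
def CDN (D : Set (Pref A)) : Prop :=
  DConnected D ∧
    ∀ P ∈ D, ∃ Q ∈ Nbr D (TCC D P), ∃ R ∈ Nbr D (TCC D P), Pref.top Q ≠ Pref.top R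

/-- Every alternative is top-ranked in some preference of `D`. -/
def MinimallyRich (D : Set (Pref A)) : Prop := ∀ a : A, ∃ P ∈ D, Pref.top P = a

/-- The edge relation of the induced graph `G(D)` on alternatives. -/
def EdgeD (D : Set (Pref A)) (a b : A) : Prop :=
  ∃ P ∈ D, ∃ P' ∈ D, Adjacent P P' ∧
    Pref.top P = a ∧ Pref.top P' = b ∧ rk P b = 1 ∧ rk P' a = 1

/-- `v 0, v 1, …, v (k-1)` is a path in the induced graph `G(D)`. -/
def IsPathD (D : Set (Pref A)) (k : ℕ) (v : ℕ → A) : Prop :=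
  (∀ i j, i < k → j < k → v i = v j → i = j) ∧
    ∀ i, i + 1 < k → EdgeD D (v i) (v (i + 1))

/-- Connected component of `P` in `D`. -/
def Component (D : Set (Pref A)) (P : Pref A) : Set (Pref A) :=
  {Q | Q ∈ D ∧ ReflTransGen (StepRel D) P Q}

section SCF

variable {n : ℕ} (D : Set (Pref A))

/-- Unanimity. -/
def Unanimous (f : (Fin n → D) → A) : Prop :=
  ∀ (P : Fin n → D) (a : A), (∀ i, Pref.top (P i : Pref A) = a) → f P = a

/-- Local strategy-proofness. -/
def LocallySP (f : (Fin n → D) → A) : Prop :=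
  ∀ (P : Fin n → D) (i : Fin n) (Q : D), Adjacent (P i : Pref A) (Q : Pref A) →
    ¬ SPrefers (P i : Pref A) (f (Function.update P i Q)) (f P)

/-- (Global) strategy-proofness. -/
def StrategyProof (f : (Fin n → D) → A) : Prop :=
  ∀ (P : Fin n → D) (i : Fin n) (Q : D),
    ¬ SPrefers (P i : Pref A) (f (Function.update P i Q)) (f P)

/-- Tops-onlyness. -/
def TopsOnly (f : (Fin n → D) → A) : Prop :=
  ∀ P P' : Fin n → D,
    (∀ i, Pref.top (P i : Pref A) = Pref.top (P' i : Pref A)) → f P = f P'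

/-- Dictatorship. -/
def Dictatorial (f : (Fin n → D) → A) : Prop :=
  ∃ i : Fin n, ∀ P : Fin n → D, f P = Pref.top (P i : Pref A)

/-- Voter `i` is decisive over `a`. -/
def Decisive (f : (Fin n → D) → A) (i : Fin n) (a : A) : Prop :=
  ∀ P : Fin n → D, Pref.top (P i : Pref A) = a → f P = a

end SCF

lemma adjacent_symm {A : Type*} [Fintype A] {P P' : Pref A}
    (h : Adjacent P P') : Adjacent P' P := by
  obtain ⟨a, b, h1, h2, h3, h4⟩ := h
  exact ⟨b, a, by omega, by omega, by omega, fun c hb ha => (h4 c ha hb).symm⟩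

lemma rk_top_eq_zero {A : Type*} [Fintype A] [Nonempty A] (P : Pref A) :
    rk P (Pref.top P) = 0 := by
  simp [rk, Pref.top]

lemma not_sprefers_top {A : Type*} [Fintype A] [Nonempty A] (P : Pref A) (x : A) :
    ¬ SPrefers P x (Pref.top P) := by
  intro h
  rw [SPrefers, rk_top_eq_zero] at h
  omega

/-- On a disconnected domain, the rule following voter 1 on the component of
`P*` and voter 2 elsewhere is unanimous and locally strategy-proof, and it is
not dictatorial whenever the component and its complement contain preferences
with different tops. -/
theorem stmt5 {A : Type*} [Fintype A] [Nonempty A] (hA : 3 ≤ Fintype.card A)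
    (D : Set (Pref A)) (Pstar Pstar2 : Pref A)
    (h1 : Pstar ∈ D) (h2 : Pstar2 ∈ D)
    (hnc : ¬ Relation.ReflTransGen (StepRel D) Pstar Pstar2)
    (n : ℕ) (hn : 2 ≤ n) (f : (Fin n → D) → A)
    (hf : ∀ P : Fin n → D,
      ((P ⟨0, by omega⟩ : Pref A) ∈ Component D Pstar →
        f P = Pref.top (P ⟨0, by omega⟩ : Pref A)) ∧
      ((P ⟨0, by omega⟩ : Pref A) ∉ Component D Pstar →
        f P = Pref.top (P ⟨1, by omega⟩ : Pref A))) :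
    Unanimous D f ∧ LocallySP D f ∧
      ((∃ Q ∈ Component D Pstar, ∃ R : Pref A, R ∈ D ∧ R ∉ Component D Pstar ∧
          Pref.top Q ≠ Pref.top R) →
        ¬ Dictatorial D f) := by
  have i0 : Fin n := ⟨0, by omega⟩
  set z : Fin n := ⟨0, by omega⟩ with hz
  set o : Fin n := ⟨1, by omega⟩ with ho
  have hzo : z ≠ o := by simp [hz, ho, Fin.ext_iff]
  refine ⟨?_, ?_, ?_⟩
  · -- Unanimous
    intro P a htop
    by_cases hc : (P z : Pref A) ∈ Component D Pstar
    · rw [(hf P).1 hc]; exact htop z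
    · rw [(hf P).2 hc]; exact htop o
  · -- LocallySP
    intro P i Q hadj
    set P' := Function.update P i Q with hP'
    by_cases hi0 : i = z
    · subst hi0
      have hP'0 : (P' z : Pref A) = (Q : Pref A) := by simp [hP']
      by_cases hc : (P z : Pref A) ∈ Component D Pstar
      · -- Q also in component
        have hQc : (Q : Pref A) ∈ Component D Pstar := by
          refine ⟨Q.2, hc.2.tail ?_⟩
          exact ⟨hc.1, Q.2, hadj⟩
        have := (hf P').1 (by rw [hP'0]; exact hQc)
        rw [this, hP'0, (hf P).1 hc]
        exact not_sprefers_top _ _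
      · -- Q also not in component
        have hQc : (Q : Pref A) ∉ Component D Pstar := by
          intro hQ
          exact hc ⟨(P z).2, hQ.2.tail ⟨hQ.1, (P z).2, adjacent_symm hadj⟩⟩
        have h1' := (hf P').2 (by rw [hP'0]; exact hQc)
        have hP'1 : P' o = P o := by
          rw [hP']; exact Function.update_of_ne (Ne.symm hzo) _ _
        rw [h1', hP'1, (hf P).2 hc]
        exact fun h => lt_irrefl _ h
    · have hP'0 : P' z = P z := by
        rw [hP']; exact Function.update_of_ne (Ne.symm hi0) _ _
      by_cases hc : (P z : Pref A) ∈ Component D Pstar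
      · rw [(hf P').1 (by rw [hP'0]; exact hc), (hf P).1 hc, hP'0]
        exact fun h => lt_irrefl _ h
      · rw [(hf P').2 (by rw [hP'0]; exact hc), (hf P).2 hc]
        by_cases hi1 : i = o
        · subst hi1
          have : P' o = Q := by simp [hP']
          rw [this]
          exact not_sprefers_top _ _
        · have : P' o = P o := by
            rw [hP']; exact Function.update_of_ne (Ne.symm hi1) _ _
          rw [this]
          exact fun h => lt_irrefl _ h
  · -- not dictatorial
    rintro ⟨Q, hQc, R, hRD, hRc, hQR⟩ ⟨i, hdict⟩
    by_cases hi0 : i = z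
    · subst hi0
      -- profile: voter 0 has R (outside component), voter 1 has Q
      set P : Fin n → D := fun j => if j = z then ⟨R, hRD⟩ else ⟨Q, hQc.1⟩ with hP
      have h0 : (P z : Pref A) = R := by simp [hP]
      have h1 : (P o : Pref A) = Q := by simp [hP, Ne.symm hzo]
      have := (hf P).2 (by rw [h0]; exact hRc)
      rw [hdict P, h0, h1] at this
      exact hQR this.symm
    · set P : Fin n → D := fun j => if j = z then ⟨Q, hQc.1⟩ else ⟨R, hRD⟩ with hP
      have h0 : (P z : Pref A) = Q := by simp [hP]
      have hi : (P i : Pref A) = R := by simp [hP, hi0]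
      have := (hf P).1 (by rw [h0]; exact hQc)
      rw [hdict P, h0, hi] at this
      exact hQR this.symm
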